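/- Let x* = −G·(b₁; b₂). Then x* solves the linearly constrained least-squares problem: for every feasible vector x ∈ ℝⁿ (i.e., every x with B·x + b₂ = 0), one has ‖b₁ + A·x*‖₂ ≤ ‖b₁ + A·x‖₂. -/

import Mathlib

open Matrix

/-!
Writing `M⁻¹ (Aᵀb₁; b₂) = (x₀; μ)`, the two block rows of `M` say that `x* = -x₀` satisfies
`B x* + b₂ = 0` and the normal equation `Aᵀ (b₁ + A x*) = Bᵀ μ`. For a feasible `x` the
difference `d = x - x*` lies in `ker B`, so `⟪A d, b₁ + A x*⟫ = ⟪B d, μ⟫ = 0`, and Pythagoras in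
`b₁ + A x = (b₁ + A x*) + A d` gives the inequality.
-/

theorem EuclideanSpace.norm_le_norm_add_of_dotProduct_eq_zero {m : Type*} [Fintype m]
    (y z : m → ℝ) (h : z ⬝ᵥ y = 0) :
    ‖(EuclideanSpace.equiv m ℝ).symm y‖ ≤ ‖(EuclideanSpace.equiv m ℝ).symm (y + z)‖ := by
  have hpyth := norm_add_sq_eq_norm_sq_add_norm_sq_real
    (x := (EuclideanSpace.equiv m ℝ).symm y) (y := (EuclideanSpace.equiv m ℝ).symm z) h
  rw [← map_add] at hpyth
  exact le_of_sq_le_sq (by nlinarith [sq_nonneg ‖(EuclideanSpace.equiv m ℝ).symm z‖])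
    (norm_nonneg _)

section LeastSquares

variable {m n p : Type*} [Fintype m] [Fintype n] [Fintype p]

theorem norm_residual_le_of_normal_equation (A : Matrix m n ℝ) (B : Matrix p n ℝ)
    (b : m → ℝ) (μ : p → ℝ) {x₀ x : n → ℝ} (hnormal : Aᵀ *ᵥ (b + A *ᵥ x₀) = Bᵀ *ᵥ μ)
    (hker : B *ᵥ x = B *ᵥ x₀) :
    ‖(EuclideanSpace.equiv m ℝ).symm (b + A *ᵥ x₀)‖ ≤
      ‖(EuclideanSpace.equiv m ℝ).symm (b + A *ᵥ x)‖ := by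
  have horth : A *ᵥ (x - x₀) ⬝ᵥ (b + A *ᵥ x₀) = 0 := by
    rw [dotProduct_comm, dotProduct_mulVec, ← mulVec_transpose, hnormal, mulVec_transpose,
      ← dotProduct_mulVec, mulVec_sub, hker, sub_self, dotProduct_zero]
  have hsplit : b + A *ᵥ x = (b + A *ᵥ x₀) + A *ᵥ (x - x₀) := by
    rw [mulVec_sub]; abel
  rw [hsplit]
  exact EuclideanSpace.norm_le_norm_add_of_dotProduct_eq_zero _ _ horth

theorem normal_equation_of_fromBlocks_mulVec (A : Matrix m n ℝ) (B : Matrix p n ℝ)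
    (b₁ : m → ℝ) (b₂ : p → ℝ) {x₀ : n → ℝ} {μ : p → ℝ}
    (h : fromBlocks (Aᵀ * A) Bᵀ B 0 *ᵥ Sum.elim x₀ μ = Sum.elim (Aᵀ *ᵥ b₁) b₂) :
    Aᵀ *ᵥ (b₁ + A *ᵥ -x₀) = Bᵀ *ᵥ μ ∧ B *ᵥ -x₀ = -b₂ := by
  rw [fromBlocks_mulVec, Sum.elim_eq_iff] at h
  obtain ⟨hrow₁, hrow₂⟩ := h
  simp only [Sum.elim_comp_inl, Sum.elim_comp_inr, zero_mulVec, add_zero] at hrow₁ hrow₂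
  refine ⟨?_, by rw [mulVec_neg, hrow₂]⟩
  rw [mulVec_add, mulVec_neg, mulVec_neg, mulVec_mulVec, ← hrow₁]
  abel

end LeastSquares

theorem fromCols_one_zero_mulVec {R n p : Type*} [Fintype n] [Fintype p] [DecidableEq n]
    [Semiring R] (v : n ⊕ p → R) :
    fromCols (1 : Matrix n n R) (0 : Matrix n p R) *ᵥ v = v ∘ Sum.inl := by
  rw [← Sum.elim_comp_inl_inr v, fromCols_mulVec_sumElim]
  simp

theorem fromBlocks_diag_one_mulVec_sumElim {R m n p : Type*} [Fintype m] [Fintype p]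
    [DecidableEq p] [Semiring R] (C : Matrix n m R) (u : m → R) (v : p → R) :
    fromBlocks C 0 0 (1 : Matrix p p R) *ᵥ Sum.elim u v = Sum.elim (C *ᵥ u) v := by
  simp [fromBlocks_mulVec]

theorem optimality_of_condensed_solution_general
    (n N r : ℕ)
    (A : Matrix (Fin N) (Fin n) ℝ) (B : Matrix (Fin r) (Fin n) ℝ)
    (M : Matrix (Fin n ⊕ Fin r) (Fin n ⊕ Fin r) ℝ)
    (hM : M = Matrix.fromBlocks (Aᵀ * A) Bᵀ B 0)
    (hMinv : IsUnit M)
    (G : Matrix (Fin n) (Fin N ⊕ Fin r) ℝ)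
    (hG : G = _root_.Matrix.fromCols (1 : Matrix (Fin n) (Fin n) ℝ) (0 : Matrix (Fin n) (Fin r) ℝ) * M⁻¹ *
        Matrix.fromBlocks Aᵀ 0 0 (1 : Matrix (Fin r) (Fin r) ℝ))
    (b₁ : Fin N → ℝ) (b₂ : Fin r → ℝ)
    (xstar : Fin n → ℝ) (hx : xstar = -(G.mulVec (Sum.elim b₁ b₂))) :
    ∀ x : Fin n → ℝ, B.mulVec x + b₂ = 0 →
      ‖(EuclideanSpace.equiv (Fin N) ℝ).symm (b₁ + A.mulVec xstar)‖ ≤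
        ‖(EuclideanSpace.equiv (Fin N) ℝ).symm (b₁ + A.mulVec x)‖ := by
  intro x hfeas
  set w := M⁻¹ *ᵥ Sum.elim (Aᵀ *ᵥ b₁) b₂
  have hxstar : xstar = -(w ∘ Sum.inl) := by
    rw [hx, hG, ← mulVec_mulVec, ← mulVec_mulVec, fromBlocks_diag_one_mulVec_sumElim,
      fromCols_one_zero_mulVec]
  have hMw : M *ᵥ Sum.elim (w ∘ Sum.inl) (w ∘ Sum.inr) = Sum.elim (Aᵀ *ᵥ b₁) b₂ := by
    rw [Sum.elim_comp_inl_inr, mulVec_mulVec,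
      mul_nonsing_inv _ ((isUnit_iff_isUnit_det M).mp hMinv), one_mulVec]
  rw [hM] at hMw
  obtain ⟨hnormal, hBxstar⟩ := normal_equation_of_fromBlocks_mulVec A B b₁ b₂ hMw
  rw [← hxstar] at hnormal hBxstar
  exact norm_residual_le_of_normal_equation A B b₁ _ hnormal
    (by rw [hBxstar, eq_neg_of_add_eq_zero_left hfeas])

/-- Optimality of `x* = -G·(b₁; b₂)` for the linearly constrained least-squares
problem: for every feasible `x` (i.e. `B·x + b₂ = 0`), `‖b₁ + A·x*‖₂ ≤ ‖b₁ + A·x‖₂`. -/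
theorem optimality_of_condensed_solution
    (n N r : ℕ) (hn : 0 < n) (hN : 0 < N) (hr : 0 < r)
    (A : Matrix (Fin N) (Fin n) ℝ) (B : Matrix (Fin r) (Fin n) ℝ)
    (M : Matrix (Fin n ⊕ Fin r) (Fin n ⊕ Fin r) ℝ)
    (hM : M = Matrix.fromBlocks (Aᵀ * A) Bᵀ B 0)
    (hMinv : IsUnit M)
    (G : Matrix (Fin n) (Fin N ⊕ Fin r) ℝ)
    (hG : G = _root_.Matrix.fromCols (1 : Matrix (Fin n) (Fin n) ℝ) (0 : Matrix (Fin n) (Fin r) ℝ) * M⁻¹ *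
        Matrix.fromBlocks Aᵀ 0 0 (1 : Matrix (Fin r) (Fin r) ℝ))
    (b₁ : Fin N → ℝ) (b₂ : Fin r → ℝ)
    (xstar : Fin n → ℝ) (hx : xstar = -(G.mulVec (Sum.elim b₁ b₂))) :
    ∀ x : Fin n → ℝ, B.mulVec x + b₂ = 0 →
      ‖(EuclideanSpace.equiv (Fin N) ℝ).symm (b₁ + A.mulVec xstar)‖ ≤
        ‖(EuclideanSpace.equiv (Fin N) ℝ).symm (b₁ + A.mulVec x)‖ :=
  optimality_of_condensed_solution_general n N r A B M hM hMinv G hG b₁ b₂ xstar hx
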